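/- arXiv:math-ph/0409016 — 7 statements merged into one kernel-verified Lean document; each statement's English description precedes it below -/
import Mathlib

section
/- For integers N ≥ 2 and 0 ≤ k ≤ N-1, with ω = exp(2πi/N), the sum ∑_{n=1}^{N-1} ω^{(k+1)n} / (1 - ω^n)^2 equals 1/12 - (N^2/2)·B₂(k/N), where B₂(x) = x² - x + 1/6 is the second Bernoulli polynomial. -/
open Finset

/-!
Write `S p j = rootSum ω N p j = ∑_{n=1}^{N-1} ω^{jn} / (1 - ω^n)^p`. Splitting
`ω^{(j+1)n} = ω^{jn} - ω^{jn} (1 - ω^n)` gives `S (p+1) (j+1) = S (p+1) j - S p j`, and summing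
over a full period `j = 1, …, N` gives `∑_j S p j = 0`, because each `ω^n` with `0 < n < N` is a
nontrivial `N`-th root of unity. Since `S 0 j = -1` for `N ∤ j`, the sequence `S 1 (k+1)` has
constant first differences and vanishing sum over `k < N`, which forces `S 1 (k+1) = k - (N-1)/2`;
the same argument one level up identifies `S 2 (k+1)` with the quadratic
`1/12 - (N²/2) B₂(k/N)`, whose sum over `k < N` vanishes as well.
-/

lemma geom_sum_eq_zero_of_pow_eq_one {K : Type*} [Field K] {z : K} {N : ℕ} (hz : z ≠ 1)
    (hzN : z ^ N = 1) : ∑ i ∈ range N, z ^ i = 0 := by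
  rw [geom_sum_eq hz, hzN, sub_self, zero_div]

lemma sum_range_eq_add_sum_Icc {M : Type*} [AddCommMonoid M] (f : ℕ → M) {N : ℕ} (hN : 0 < N) :
    ∑ n ∈ range N, f n = f 0 + ∑ n ∈ Icc 1 (N - 1), f n := by
  have hIcc : Icc 1 (N - 1) = Ico 1 N := by ext n; simp only [mem_Icc, mem_Ico]; omega
  rw [sum_range_eq_add_Ico f hN, hIcc]

lemma eqOn_range_of_sub_eq_of_sum_eq {K : Type*} [Field K] [CharZero K] {f g : ℕ → K} {N : ℕ}
    (hdiff : ∀ k, k + 1 < N → f (k + 1) - f k = g (k + 1) - g k)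
    (hsum : ∑ k ∈ range N, f k = ∑ k ∈ range N, g k) :
    ∀ k < N, f k = g k := by
  have hconst : ∀ k < N, f k - g k = f 0 - g 0 := by
    intro k hk
    induction k with
    | zero => rfl
    | succ k ih => rw [← ih (by omega)]; linear_combination hdiff k hk
  have hprod : (N : K) * (f 0 - g 0) = 0 := by
    rw [← nsmul_eq_mul, ← card_range N, ← sum_const, ← sum_congr rfl fun k hk =>
      hconst k (mem_range.1 hk), sum_sub_distrib, hsum, sub_self]
  intro k hk
  have h0 : f 0 - g 0 = 0 := (mul_eq_zero.1 hprod).resolve_left (by exact_mod_cast hk.ne_bot)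
  linear_combination hconst k hk + h0

section RootSum

variable {K : Type*} [Field K]

def rootSum (ω : K) (N p j : ℕ) : K :=
  ∑ n ∈ Icc 1 (N - 1), ω ^ (j * n) / (1 - ω ^ n) ^ p

variable {ω : K} {N : ℕ}

lemma rootSum_succ_succ (hω : IsPrimitiveRoot ω N) (p j : ℕ) :
    rootSum ω N (p + 1) (j + 1) = rootSum ω N (p + 1) j - rootSum ω N p j := by
  rw [rootSum, rootSum, rootSum, ← sum_sub_distrib]
  refine sum_congr rfl fun n hn => ?_
  obtain ⟨hn1, hnN⟩ := mem_Icc.1 hn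
  have hne : 1 - ω ^ n ≠ 0 :=
    sub_ne_zero.2 (hω.pow_ne_one_of_pos_of_lt (by omega) (by omega)).symm
  rw [add_mul, one_mul, pow_add, pow_succ]
  field_simp
  ring

lemma rootSum_zero_of_not_dvd (hω : IsPrimitiveRoot ω N) (hN : 0 < N) {j : ℕ} (hj : ¬ N ∣ j) :
    rootSum ω N 0 j = -1 := by
  have hgeom := geom_sum_eq_zero_of_pow_eq_one (mt (hω.pow_eq_one_iff_dvd j).1 hj)
    (by rw [← pow_mul, mul_comm, pow_mul, hω.pow_eq_one, one_pow])
  rw [sum_range_eq_add_sum_Icc _ hN] at hgeom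
  simp only [rootSum, pow_zero, div_one, pow_mul]
  linear_combination hgeom

lemma sum_rootSum_eq_zero (hω : IsPrimitiveRoot ω N) (p : ℕ) :
    ∑ k ∈ range N, rootSum ω N p (k + 1) = 0 := by
  simp only [rootSum]
  rw [sum_comm]
  refine sum_eq_zero fun n hn => ?_
  obtain ⟨hn1, hnN⟩ := mem_Icc.1 hn
  have hgeom := geom_sum_eq_zero_of_pow_eq_one
    (hω.pow_ne_one_of_pos_of_lt (l := n) (by omega) (by omega))
    (by rw [← pow_mul, mul_comm, pow_mul, hω.pow_eq_one, one_pow])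
  have hterm : ∀ k, ω ^ ((k + 1) * n) = ω ^ n * (ω ^ n) ^ k := fun k => by ring
  rw [sum_congr rfl fun k _ => by rw [hterm k], ← sum_div, ← mul_sum, hgeom, mul_zero, zero_div]

variable [CharZero K]

lemma rootSum_one_succ (hω : IsPrimitiveRoot ω N) (hN : 0 < N) :
    ∀ k < N, rootSum ω N 1 (k + 1) = k - ((N : K) - 1) / 2 := by
  refine eqOn_range_of_sub_eq_of_sum_eq (fun k hk => ?_) ?_
  · rw [rootSum_succ_succ hω 0 (k + 1),
      rootSum_zero_of_not_dvd hω hN (Nat.not_dvd_of_pos_of_lt k.succ_pos hk)]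
    push_cast
    ring
  · have hsum : ∀ M : ℕ, ∑ k ∈ range M, ((k : K) - ((N : K) - 1) / 2) = M * (M - N) / 2 := by
      intro M
      induction M with
      | zero => simp
      | succ M ih => rw [sum_range_succ, ih]; push_cast; ring
    rw [sum_rootSum_eq_zero hω, hsum, sub_self, mul_zero, zero_div]

lemma rootSum_two_succ (hω : IsPrimitiveRoot ω N) (hN : 0 < N) :
    ∀ k < N, rootSum ω N 2 (k + 1) =
      1 / 12 - (N : K) ^ 2 / 2 * (((k : K) / N) ^ 2 - (k : K) / N + 1 / 6) := by
  have hN0 : (N : K) ≠ 0 := by exact_mod_cast hN.ne'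
  refine eqOn_range_of_sub_eq_of_sum_eq (fun k hk => ?_) ?_
  · rw [rootSum_succ_succ hω 1 (k + 1), rootSum_one_succ hω hN k (by omega)]
    field_simp
    push_cast
    ring
  · have hsum : ∀ M : ℕ, ∑ k ∈ range M,
        (1 / 12 - (N : K) ^ 2 / 2 * (((k : K) / N) ^ 2 - (k : K) / N + 1 / 6)) =
          (M : K) * (M - N) * (N - 2 * M + 3) / 12 := by
      intro M
      induction M with
      | zero => simp
      | succ M ih => rw [sum_range_succ, ih]; field_simp; push_cast; ring
    rw [sum_rootSum_eq_zero hω, hsum, sub_self, mul_zero, zero_mul, zero_div]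

end RootSum

theorem omega_bernoulli_sum (N k : ℕ) (hN : 2 ≤ N) (hk : k ≤ N - 1) :
    ∑ n ∈ Finset.Icc 1 (N - 1),
      Complex.exp (2 * Real.pi * Complex.I / N) ^ ((k + 1) * n) /
        (1 - Complex.exp (2 * Real.pi * Complex.I / N) ^ n) ^ 2
    = 1 / 12 - (N : ℂ) ^ 2 / 2 * (((k : ℂ) / N) ^ 2 - (k : ℂ) / N + 1 / 6) :=
  rootSum_two_succ (Complex.isPrimitiveRoot_exp N (by omega)) (by omega) k (by omega)
end

section
/- For an integer N ≥ 2, ω = exp(2πi/N), and an integer a with 0 < a < N, one has ω^a/(1 - ω^a)² = (1/(2N)) ∑_{c=0}^{N-1} c·(N - c)·ω^{ac}. -/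
open Finset

/-!
With `S n x = ∑_{c<n} c (n - c) x^c`, one has `S (n+1) x = S n x + ∑_{c≤n} c x^c`, which gives the
polynomial identity `(1 - x)^3 S n x = x ((n-1) - (n+1) x + (n+1) x^n - (n-1) x^(n+1))`.
For `x = ω^a`, an `N`-th root of unity other than `1`, the right side collapses to `2 N x (1 - x)`.
-/

section WeightedGeometricSums

variable {R : Type*} [CommRing R]

theorem one_sub_sq_mul_sum_range_mul_pow (x : R) (n : ℕ) :
    (1 - x) ^ 2 * ∑ c ∈ range n, (c : R) * x ^ c
      = x - n * x ^ n + (n - 1) * x ^ (n + 1) := by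
  induction n with
  | zero => simp
  | succ n ih =>
    rw [sum_range_succ, mul_add, ih]
    push_cast
    ring

theorem sum_range_succ_mul_sub_mul_pow (x : R) (n : ℕ) :
    ∑ c ∈ range (n + 1), (c : R) * ((n + 1 : ℕ) - c) * x ^ c
      = ∑ c ∈ range n, (c : R) * (n - c) * x ^ c + ∑ c ∈ range (n + 1), (c : R) * x ^ c := by
  rw [sum_range_succ, sum_range_succ _ n, ← add_assoc, ← sum_add_distrib]
  push_cast
  congr 1
  · exact sum_congr rfl fun c _ => by ring
  · ring

theorem one_sub_pow_three_mul_sum_range_mul_sub_mul_pow (x : R) (n : ℕ) :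
    (1 - x) ^ 3 * ∑ c ∈ range n, (c : R) * (n - c) * x ^ c
      = x * ((n - 1) - (n + 1) * x + (n + 1) * x ^ n - (n - 1) * x ^ (n + 1)) := by
  induction n with
  | zero => simp only [range_zero, sum_empty, mul_zero, Nat.cast_zero]; ring
  | succ n ih =>
    have h := one_sub_sq_mul_sum_range_mul_pow x (n + 1)
    rw [sum_range_succ_mul_sub_mul_pow, mul_add, ih]
    push_cast at h ⊢
    linear_combination (1 - x) * h

end WeightedGeometricSums

theorem sum_range_mul_sub_mul_pow_of_pow_eq_one {K : Type*} [Field K] {x : K} {n : ℕ}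
    (hxn : x ^ n = 1) (hx : x ≠ 1) :
    ∑ c ∈ range n, (c : K) * (n - c) * x ^ c = 2 * n * x / (1 - x) ^ 2 := by
  have hsub : 1 - x ≠ 0 := sub_ne_zero.mpr hx.symm
  have key := one_sub_pow_three_mul_sum_range_mul_sub_mul_pow x n
  rw [hxn, pow_succ x n, hxn] at key
  rw [eq_div_iff (pow_ne_zero 2 hsub)]
  apply mul_left_cancel₀ hsub
  linear_combination key

theorem root_of_unity_quadratic_sum_general (N a : ℕ) (ha0 : 0 < a) (ha : a < N) :
    Complex.exp (2 * Real.pi * Complex.I / N) ^ a /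
      (1 - Complex.exp (2 * Real.pi * Complex.I / N) ^ a) ^ 2
    = (1 / (2 * (N : ℂ))) * ∑ c ∈ Finset.range N,
        (c : ℂ) * ((N : ℂ) - (c : ℂ)) * Complex.exp (2 * Real.pi * Complex.I / N) ^ (a * c) := by
  have hN : (N : ℂ) ≠ 0 := Nat.cast_ne_zero.mpr (by omega)
  have hprim := Complex.isPrimitiveRoot_exp N (by omega)
  set ω := Complex.exp (2 * Real.pi * Complex.I / N)
  have hpow_N : (ω ^ a) ^ N = 1 := by rw [← pow_mul, mul_comm, pow_mul, hprim.pow_eq_one, one_pow]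
  have hne_one : ω ^ a ≠ 1 := hprim.pow_ne_one_of_pos_of_lt ha0.ne' ha
  simp only [pow_mul, sum_range_mul_sub_mul_pow_of_pow_eq_one hpow_N hne_one]
  field_simp

theorem root_of_unity_quadratic_sum (N a : ℕ) (hN : 2 ≤ N) (ha0 : 0 < a) (ha : a < N) :
    Complex.exp (2 * Real.pi * Complex.I / N) ^ a /
      (1 - Complex.exp (2 * Real.pi * Complex.I / N) ^ a) ^ 2
    = (1 / (2 * (N : ℂ))) * ∑ c ∈ Finset.range N,
        (c : ℂ) * ((N : ℂ) - (c : ℂ)) * Complex.exp (2 * Real.pi * Complex.I / N) ^ (a * c) :=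
  root_of_unity_quadratic_sum_general N a ha0 ha
end

section
/- Dedekind reciprocity: for coprime positive integers a, b, s(b,a) + s(a,b) = -1/4 + (1/12)·(a/b + b/a + 1/(ab)). -/
/-!
With `r_k = kb mod a`, the Dedekind sum is `s(b, a) = a⁻² ∑ k r_k - (a - 1)/4`. Since `k ↦ r_k`
permutes `1, …, a - 1`, substituting `a ⌊kb/a⌋ = kb - r_k` expresses the sum of `k + m` over the
lattice points `0 < k < a`, `0 < m ≤ kb/a` through `∑ k r_k`. Together with the same sum for `a` and
`b` exchanged this counts every lattice point of the open rectangle `(0, a) × (0, b)` exactly once,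
which gives a linear relation between `s(b, a)` and `s(a, b)`: the reciprocity law.
-/

open Finset

/-- The sawtooth function `((x))`. -/
noncomputable def sawtooth (x : ℚ) : ℚ := if x.den = 1 then 0 else x - ⌊x⌋ - 1/2

/-- The Dedekind sum `s(b, a) = ∑_{k=1}^{a} ((k/a)) ((kb/a))`. -/
noncomputable def dedekindSum (b a : ℤ) : ℚ :=
  ∑ k ∈ Finset.Icc (1 : ℤ) a, sawtooth ((k : ℚ) / a) * sawtooth (((k * b : ℤ) : ℚ) / a)

theorem sawtooth_intCast_div {n a : ℤ} (ha : 0 < a) (h : ¬ a ∣ n) :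
    sawtooth ((n : ℚ) / a) = ((n % a : ℤ) : ℚ) / a - 1 / 2 := by
  rw [sawtooth, if_neg (by rwa [Rat.den_div_intCast_eq_one_iff _ _ ha.ne']), Int.self_sub_floor]
  lift a to ℕ using ha.le
  rw [Int.cast_natCast, Int.fract_div_intCast_eq_div_intCast_mod]

theorem sum_Ico_one_intCast {n : ℤ} (hn : 1 ≤ n) : ∑ k ∈ Ico 1 n, (k : ℚ) = n * (n - 1) / 2 := by
  induction n, hn using Int.leInduction with
  | base => simp
  | succ n hn ih =>
    rw [Ico_add_one_right_eq_Icc, ← Ico_insert_right (by omega), sum_insert (by simp), ih]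
    push_cast
    ring

theorem sum_Ico_one_intCast_sq {n : ℤ} (hn : 1 ≤ n) :
    ∑ k ∈ Ico 1 n, (k : ℚ) ^ 2 = n * (n - 1) * (2 * n - 1) / 6 := by
  induction n, hn using Int.leInduction with
  | base => simp
  | succ n hn ih =>
    rw [Ico_add_one_right_eq_Icc, ← Ico_insert_right (by omega), sum_insert (by simp), ih]
    push_cast
    ring

theorem card_Ico_one_intCast {n : ℤ} (hn : 1 ≤ n) : ((Ico 1 n).card : ℚ) = n - 1 := by
  rw [Int.card_Ico, ← Int.cast_natCast, Int.toNat_of_nonneg (by omega)]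
  push_cast
  ring

theorem not_dvd_mul_of_mem_Ico {a b k : ℤ} (hab : IsCoprime a b) (hk : k ∈ Ico 1 a) :
    ¬ a ∣ k * b := fun h => by
  rw [mem_Ico] at hk
  have := Int.eq_zero_of_dvd_of_nonneg_of_lt (by omega) hk.2 (hab.dvd_of_dvd_mul_right h)
  omega

theorem mul_emod_mem_Ico {a b k : ℤ} (ha : 0 < a) (hab : IsCoprime a b) (hk : k ∈ Ico 1 a) :
    k * b % a ∈ Ico 1 a := by
  have hne : k * b % a ≠ 0 := fun h => not_dvd_mul_of_mem_Ico hab hk (Int.dvd_of_emod_eq_zero h)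
  have := Int.emod_nonneg (k * b) ha.ne'
  have := Int.emod_lt_of_pos (k * b) ha
  rw [mem_Ico]
  omega

theorem sum_Ico_comp_mul_emod {M : Type*} [AddCommMonoid M] {a b : ℤ} (ha : 0 < a)
    (hab : IsCoprime a b) (f : ℤ → M) :
    ∑ k ∈ Ico 1 a, f (k * b % a) = ∑ k ∈ Ico 1 a, f k := by
  obtain ⟨u, v, huv⟩ := id hab
  have hav : IsCoprime a v := ⟨u, b, by linear_combination huv⟩
  have inv : ∀ {c d : ℤ}, u * a + c * d = 1 → ∀ k ∈ Ico 1 a, k * d % a * c % a = k := by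
    intro c d hcd k hk
    rw [mem_Ico] at hk
    have : k * d % a * c ≡ k [ZMOD a] := calc
      k * d % a * c ≡ k * d * c [ZMOD a] := (Int.mod_modEq _ _).mul_right c
      _ = k + a * (-(k * u)) := by linear_combination k * hcd
      _ ≡ k [ZMOD a] := Int.add_mul_emod_self_left k a _
    rw [this.eq, Int.emod_eq_of_lt (by omega) hk.2]
  exact sum_nbij' (fun k => k * b % a) (fun k => k * v % a)
    (fun k hk => mul_emod_mem_Ico ha hab hk) (fun k hk => mul_emod_mem_Ico ha hav hk)
    (inv huv) (inv (by linear_combination huv)) (fun _ _ => rfl)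

theorem dedekindSum_eq_sum_mul_emod {a b : ℤ} (ha : 0 < a) (hab : IsCoprime a b) :
    dedekindSum b a = (∑ k ∈ Ico 1 a, (k : ℚ) * ((k * b % a : ℤ) : ℚ)) / a ^ 2 - (a - 1) / 4 := by
  have haQ : (a : ℚ) ≠ 0 := by positivity
  have hterm : ∀ k ∈ Ico 1 a, sawtooth ((k : ℚ) / a) * sawtooth (((k * b : ℤ) : ℚ) / a)
      = k * ((k * b % a : ℤ) : ℚ) / a ^ 2 - k / (2 * a) - ((k * b % a : ℤ) : ℚ) / (2 * a)
        + 1 / 4 := by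
    intro k hk
    have hka : ¬ a ∣ k := by simpa using not_dvd_mul_of_mem_Ico isCoprime_one_right hk
    rw [sawtooth_intCast_div ha hka, sawtooth_intCast_div ha (not_dvd_mul_of_mem_Ico hab hk),
      Int.emod_eq_of_lt (by linarith [(mem_Ico.1 hk).1]) (mem_Ico.1 hk).2]
    ring
  have hone : sawtooth 1 = 0 := by simp [sawtooth]
  rw [dedekindSum, ← Ico_insert_right ha, sum_insert (by simp), div_self haQ, hone, zero_mul,
    zero_add, sum_congr rfl hterm]
  simp only [sum_add_distrib, sum_sub_distrib, sum_const, nsmul_eq_mul, ← sum_div]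
  rw [sum_Ico_comp_mul_emod ha hab (fun r : ℤ => (r : ℚ)), sum_Ico_one_intCast ha,
    card_Ico_one_intCast ha]
  field_simp
  ring

theorem Ico_one_ediv_eq_filter {a b k : ℤ} (ha : 0 < a) (hb : 0 < b) (hk : k < a) :
    Ico 1 (k * b / a + 1) = (Ico 1 b).filter (fun m => m * a ≤ k * b) := by
  ext m
  simp only [mem_Ico, mem_filter, Int.lt_add_one_iff, Int.le_ediv_iff_mul_le ha]
  constructor
  · rintro ⟨hm, hma⟩
    exact ⟨⟨hm, lt_of_mul_lt_mul_right (by nlinarith) ha.le⟩, hma⟩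
  · rintro ⟨⟨hm, -⟩, hma⟩
    exact ⟨hm, hma⟩

/-- As `a, b` are coprime, no lattice point of the open rectangle `(0, a) × (0, b)` lies on its
diagonal, so the points below it and those above it partition the rectangle. -/
theorem sum_Ico_ediv_add_sum_Ico_ediv {M : Type*} [AddCommMonoid M] {a b : ℤ} (ha : 0 < a)
    (hb : 0 < b) (hab : IsCoprime a b) (f : ℤ → ℤ → M) :
    ∑ k ∈ Ico 1 a, ∑ m ∈ Ico 1 (k * b / a + 1), f k m
      + ∑ m ∈ Ico 1 b, ∑ k ∈ Ico 1 (m * a / b + 1), f k m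
      = ∑ k ∈ Ico 1 a, ∑ m ∈ Ico 1 b, f k m := by
  have below : ∑ k ∈ Ico 1 a, ∑ m ∈ Ico 1 (k * b / a + 1), f k m
      = ∑ k ∈ Ico 1 a, ∑ m ∈ Ico 1 b, if m * a ≤ k * b then f k m else 0 :=
    sum_congr rfl fun k hk => by rw [Ico_one_ediv_eq_filter ha hb (mem_Ico.1 hk).2, sum_filter]
  have above : ∑ m ∈ Ico 1 b, ∑ k ∈ Ico 1 (m * a / b + 1), f k m
      = ∑ k ∈ Ico 1 a, ∑ m ∈ Ico 1 b, if k * b ≤ m * a then f k m else 0 :=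
    (sum_congr rfl fun m hm => by
      rw [Ico_one_ediv_eq_filter hb ha (mem_Ico.1 hm).2, sum_filter]).trans sum_comm
  rw [below, above, ← sum_add_distrib]
  refine sum_congr rfl fun k hk => ?_
  rw [← sum_add_distrib]
  refine sum_congr rfl fun m _ => ?_
  have hne : m * a ≠ k * b := fun h => not_dvd_mul_of_mem_Ico hab hk (h ▸ dvd_mul_left a m)
  by_cases h : m * a ≤ k * b
  · rw [if_pos h, if_neg (by omega), add_zero]
  · rw [if_neg h, if_pos (by omega), zero_add]

noncomputable def latticeSum (a b : ℤ) : ℚ :=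
  ∑ k ∈ Ico 1 a, ∑ m ∈ Ico 1 (k * b / a + 1), ((k : ℚ) + m)

theorem latticeSum_add_latticeSum_swap {a b : ℤ} (ha : 0 < a) (hb : 0 < b)
    (hab : IsCoprime a b) :
    latticeSum a b + latticeSum b a
      = (b - 1) * (a * (a - 1) / 2) + (a - 1) * (b * (b - 1) / 2) := by
  have hswap : latticeSum b a = ∑ m ∈ Ico 1 b, ∑ k ∈ Ico 1 (m * a / b + 1), ((k : ℚ) + m) :=
    sum_congr rfl fun _ _ => sum_congr rfl fun _ _ => add_comm _ _
  rw [latticeSum, hswap, sum_Ico_ediv_add_sum_Ico_ediv ha hb hab fun k m => (k : ℚ) + m]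
  simp only [sum_add_distrib, sum_const, nsmul_eq_mul, ← mul_sum]
  rw [sum_Ico_one_intCast ha, sum_Ico_one_intCast hb, card_Ico_one_intCast ha,
    card_Ico_one_intCast hb]

theorem two_mul_sq_mul_latticeSum {a b : ℤ} (ha : 0 < a) (hb : 0 < b) (hab : IsCoprime a b) :
    2 * a ^ 2 * latticeSum a b
      = (2 * a * b + b ^ 2 + 1) * (a * (a - 1) * (2 * a - 1) / 6) + (a * b - a) * (a * (a - 1) / 2)
        - 2 * (a + b) * ∑ k ∈ Ico 1 a, (k : ℚ) * ((k * b % a : ℤ) : ℚ) := by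
  have hterm : ∀ k ∈ Ico 1 a, 2 * a ^ 2 * ∑ m ∈ Ico 1 (k * b / a + 1), ((k : ℚ) + m)
      = (2 * a * b + b ^ 2) * (k : ℚ) ^ 2 + ((k * b % a : ℤ) : ℚ) ^ 2
        - 2 * (a + b) * ((k : ℚ) * ((k * b % a : ℤ) : ℚ))
        + a * b * k - a * ((k * b % a : ℤ) : ℚ) := by
    intro k hk
    have hq : 0 ≤ k * b / a :=
      Int.ediv_nonneg (mul_nonneg (by linarith [(mem_Ico.1 hk).1]) hb.le) ha.le
    have hdiv : (a : ℚ) * ((k * b / a : ℤ) : ℚ) = k * b - ((k * b % a : ℤ) : ℚ) := by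
      rw [eq_sub_iff_add_eq]
      exact_mod_cast Int.mul_ediv_add_emod (k * b) a
    rw [sum_add_distrib, sum_const, nsmul_eq_mul, card_Ico_one_intCast (by omega),
      sum_Ico_one_intCast (by omega)]
    push_cast
    linear_combination
      (2 * a * k + a * ((k * b / a : ℤ) : ℚ) + (k * b - ((k * b % a : ℤ) : ℚ)) + a) * hdiv
  rw [latticeSum, mul_sum, sum_congr rfl hterm]
  simp only [sum_add_distrib, sum_sub_distrib, ← mul_sum]
  rw [sum_Ico_comp_mul_emod ha hab (fun r : ℤ => (r : ℚ) ^ 2),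
    sum_Ico_comp_mul_emod ha hab (fun r : ℤ => (r : ℚ)), sum_Ico_one_intCast ha,
    sum_Ico_one_intCast_sq ha]
  ring

theorem dedekind_reciprocity (a b : ℤ) (ha : 1 ≤ a) (hb : 1 ≤ b) (hab : Int.gcd a b = 1) :
    dedekindSum b a + dedekindSum a b
      = -1/4 + (1/12) * ((a : ℚ) / b + (b : ℚ) / a + 1 / ((a : ℚ) * b)) := by
  have hco : IsCoprime a b := Int.isCoprime_iff_gcd_eq_one.mpr hab
  have hL := latticeSum_add_latticeSum_swap ha hb hco
  have hLab := two_mul_sq_mul_latticeSum ha hb hco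
  have hLba := two_mul_sq_mul_latticeSum hb ha hco.symm
  rw [dedekindSum_eq_sum_mul_emod ha hco, dedekindSum_eq_sum_mul_emod hb hco.symm]
  have haQ : (0 : ℚ) < a := by exact_mod_cast ha
  have hbQ : (0 : ℚ) < b := by exact_mod_cast hb
  field_simp
  apply mul_left_cancel₀ (by positivity : (a + b : ℚ) ≠ 0)
  linear_combination 24 * b ^ 2 * hLab + 24 * a ^ 2 * hLba - 48 * a ^ 2 * b ^ 2 * hL
end

section
/- For coprime integers a ≥ 1 and b, the Dedekind sum can be written as the cotangent sum: s(b,a) = (1/(4a)) ∑_{k=1}^{a-1} cot(kπ/a)·cot(kbπ/a). -/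
/-!
Write `((m/n))` for the sawtooth. Summing a geometric series against it gives the finite
Fourier expansion `cot (π j / n) = 2 i ∑_{m < n} ((m/n)) e^{2π i j m / n}`. Substituting this
for both cotangents in `∑_k cot (π k / n) cot (π k b / n)` and summing over `k` first,
orthogonality of the characters `k ↦ e^{2π i k x / n}` keeps only the terms with
`m ≡ -b l (mod n)`; since the sawtooth is odd and `n`-periodic, what is left is
`4 n ∑_l ((l/n)) ((b l/n))`.
-/

open Finset Real

open Complex (I)
open scoped Complex

theorem sawtooth_add_one (x : ℚ) : sawtooth (x + 1) = sawtooth x := by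
  have hden : (x + 1).den = x.den := by exact_mod_cast Rat.add_intCast_den x 1
  simp only [sawtooth, hden, Int.floor_add_one]
  push_cast
  ring_nf

theorem sawtooth_neg (x : ℚ) : sawtooth (-x) = -sawtooth x := by
  unfold sawtooth
  rw [Rat.neg_den]
  split_ifs with hden
  · simp
  · have hfract : Int.fract x ≠ 0 := by
      rintro hx
      obtain ⟨z, rfl⟩ := Int.fract_eq_zero_iff.mp hx
      exact hden (Rat.den_intCast z)
    have := Int.fract_neg hfract
    rw [Int.fract, Int.fract] at this
    linarith

theorem sawtooth_of_mem_Ioo {x : ℚ} (hx : x ∈ Set.Ioo 0 1) : sawtooth x = x - 1 / 2 := by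
  have hfloor : ⌊x⌋ = 0 := Int.floor_eq_zero_iff.mpr (Set.Ioo_subset_Ico_self hx)
  have hden : x.den ≠ 1 := by
    intro h
    rw [Rat.den_eq_one_iff] at h
    obtain ⟨h0, h1⟩ := hx
    rw [← h] at h0 h1
    norm_cast at h0 h1
    omega
  simp [sawtooth, hden, hfloor]

theorem periodic_sawtooth_intCast_div (n : ℕ) (hn : n ≠ 0) :
    Function.Periodic (fun m : ℤ ↦ sawtooth (m / n)) n := by
  intro m
  have hshift : ((m + n : ℤ) : ℚ) / n = m / n + 1 := by
    push_cast
    field_simp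
  simp only [hshift, sawtooth_add_one]

theorem sum_range_pow_eq_zero {K : Type*} [Field K] {q : K} {n : ℕ} (hq : q ^ n = 1)
    (hq1 : q ≠ 1) : ∑ i ∈ range n, q ^ i = 0 := by
  rw [geom_sum_eq hq1, hq, sub_self, zero_div]

theorem sub_one_mul_sum_range_mul_pow {R : Type*} [CommRing R] (q : R) (n : ℕ) :
    (q - 1) * ∑ i ∈ range n, (i : R) * q ^ i = n * q ^ n - q * ∑ i ∈ range n, q ^ i := by
  induction n with
  | zero => simp
  | succ n ih =>
    rw [sum_range_succ, sum_range_succ, mul_add, ih]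
    push_cast
    ring

theorem sum_range_natCast_mul_two {R : Type*} [CommRing R] (n : ℕ) :
    (∑ i ∈ range n, (i : R)) * 2 = n * (n - 1) := by
  induction n with
  | zero => simp
  | succ n ih =>
    rw [sum_range_succ, add_mul, ih]
    push_cast
    ring

theorem sawtooth_natCast_div_of_lt {i n : ℕ} (hi : i < n) :
    sawtooth (i / n) = i / n - 1 / 2 + if i = 0 then 1 / 2 else 0 := by
  rcases eq_or_ne i 0 with rfl | hi0
  · simp [sawtooth]
  · have hn : (0 : ℚ) < n := by exact_mod_cast (hi0.bot_lt.trans hi)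
    rw [sawtooth_of_mem_Ioo ⟨div_pos (by exact_mod_cast hi0.bot_lt) hn,
      (div_lt_one hn).mpr (by exact_mod_cast hi)⟩]
    simp [hi0]

theorem sum_range_sawtooth_mul_pow {K : Type*} [Field K] [CharZero K] {n : ℕ} (hn : n ≠ 0)
    (q : K) : ∑ i ∈ range n, (sawtooth (i / n) : K) * q ^ i =
      (∑ i ∈ range n, (i : K) * q ^ i) / n - (∑ i ∈ range n, q ^ i) / 2 + 1 / 2 := by
  rw [sum_congr rfl fun i hi ↦ by rw [sawtooth_natCast_div_of_lt (mem_range.mp hi)]]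
  simp only [Rat.cast_add, Rat.cast_sub, Rat.cast_div, Rat.cast_natCast,
    apply_ite (Rat.cast (K := K)), Rat.cast_one, Rat.cast_ofNat, Rat.cast_zero, add_mul, sub_mul,
    sum_add_distrib, sum_sub_distrib, ite_mul, zero_mul, sum_ite_eq', mem_range,
    Nat.pos_of_ne_zero hn, if_true, pow_zero, div_mul_eq_mul_div, ← sum_div, one_mul]

theorem sum_range_sawtooth {K : Type*} [Field K] [CharZero K] {n : ℕ} (hn : n ≠ 0) :
    ∑ i ∈ range n, (sawtooth (i / n) : K) = 0 := by
  have h := sum_range_sawtooth_mul_pow (K := K) hn 1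
  simp only [one_pow, mul_one, sum_const, card_range, nsmul_eq_mul] at h
  rw [h]
  have hn' : (n : K) ≠ 0 := by exact_mod_cast hn
  field_simp
  linear_combination sum_range_natCast_mul_two (R := K) n

theorem sum_range_sawtooth_mul_pow_of_ne_one {K : Type*} [Field K] [CharZero K] {n : ℕ}
    (hn : n ≠ 0) {q : K} (hq : q ^ n = 1) (hq1 : q ≠ 1) :
    ∑ i ∈ range n, (sawtooth (i / n) : K) * q ^ i = (q + 1) / (2 * (q - 1)) := by
  have hgeom := sum_range_pow_eq_zero hq hq1
  have habel := sub_one_mul_sum_range_mul_pow q n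
  rw [hq, hgeom] at habel
  rw [sum_range_sawtooth_mul_pow hn, hgeom]
  have hn' : (n : K) ≠ 0 := by exact_mod_cast hn
  have hq1' : q - 1 ≠ 0 := sub_ne_zero.mpr hq1
  field_simp
  linear_combination 2 * habel

theorem exp_two_pi_I_mul_natCast_div_eq_pow (n i : ℕ) (x : ℂ) :
    cexp (2 * π * I * x * i / n) = cexp (2 * π * I * x / n) ^ i := by
  rw [← Complex.exp_nat_mul]
  ring_nf

theorem exp_two_pi_I_intCast_div_pow_self {n : ℕ} (hn : n ≠ 0) (x : ℤ) :
    cexp (2 * π * I * x / n) ^ n = 1 := by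
  rw [← exp_two_pi_I_mul_natCast_div_eq_pow, ← Complex.exp_int_mul_two_pi_mul_I x]
  congr 1
  field_simp

theorem sum_range_exp_two_pi_I_mul_div {n : ℕ} (hn : n ≠ 0) (x : ℤ) :
    ∑ k ∈ range n, cexp (2 * π * I * x * k / n) =
      if (n : ℤ) ∣ x then (n : ℂ) else 0 := by
  simp_rw [exp_two_pi_I_mul_natCast_div_eq_pow]
  split_ifs with hdvd
  · obtain ⟨t, rfl⟩ := hdvd
    have hq : cexp (2 * π * I * (n * t) / n) = 1 := by
      rw [← Complex.exp_int_mul_two_pi_mul_I t]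
      congr 1
      field_simp
    simp [hq]
  · refine sum_range_pow_eq_zero (exp_two_pi_I_intCast_div_pow_self hn x) fun hq ↦ hdvd ?_
    obtain ⟨m, hm⟩ := Complex.exp_eq_one_iff.mp hq
    have hn' : (n : ℂ) ≠ 0 := by exact_mod_cast hn
    field_simp at hm
    exact ⟨m, by exact_mod_cast hm⟩

theorem sum_range_ite_dvd_sub {M : Type*} [AddCommMonoid M] {n : ℕ} (hn : n ≠ 0) {f : ℤ → M}
    (hf : Function.Periodic f n) (c : ℤ) :
    ∑ i ∈ range n, (if (n : ℤ) ∣ i - c then f i else 0) = f c := by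
  have hn' : (0 : ℤ) < n := by exact_mod_cast Nat.pos_of_ne_zero hn
  have hc₀ : 0 ≤ c % n := Int.emod_nonneg c hn'.ne'
  have hc₁ : c % n < n := Int.emod_lt_of_pos c hn'
  rw [sum_ite, sum_const_zero, add_zero, sum_eq_single_of_mem (c % n).toNat]
  · have hshift := hf.int_mul (c / n) (c % n)
    rw [Int.cast_id, Int.emod_add_ediv_mul] at hshift
    rw [Int.toNat_of_nonneg hc₀, hshift]
  · simp only [mem_filter, mem_range, Int.toNat_of_nonneg hc₀]
    exact ⟨by omega, ⟨-(c / n), by rw [Int.emod_def]; ring⟩⟩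
  · simp only [mem_filter, mem_range]
    rintro i ⟨hi, hdvd⟩ hne
    have hmod : c % n = i % n := Int.modEq_iff_dvd.mpr hdvd
    rw [Int.emod_eq_of_lt (Int.natCast_nonneg i) (by exact_mod_cast hi)] at hmod
    omega

noncomputable def dft (n : ℕ) (f : ℤ → ℂ) (k : ℤ) : ℂ :=
  ∑ i ∈ range n, f i * cexp (2 * π * I * k * i / n)

theorem sum_range_dft_mul_exp {n : ℕ} (hn : n ≠ 0) {f : ℤ → ℂ}
    (hf : Function.Periodic f n) (x : ℤ) :
    ∑ k ∈ range n, dft n f k * cexp (2 * π * I * x * k / n) = n * f (-x) := by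
  calc ∑ k ∈ range n, dft n f k * cexp (2 * π * I * x * k / n)
      = ∑ i ∈ range n, f i * ∑ k ∈ range n, cexp (2 * π * I * (i + x : ℤ) * k / n) := by
        simp only [dft, sum_mul, mul_sum]
        rw [sum_comm]
        refine sum_congr rfl fun i _ ↦ sum_congr rfl fun k _ ↦ ?_
        rw [mul_assoc, ← Complex.exp_add]
        push_cast
        ring_nf
    _ = n * ∑ i ∈ range n, (if (n : ℤ) ∣ i - -x then f i else 0) := by
        simp_rw [sum_range_exp_two_pi_I_mul_div hn, sub_neg_eq_add, mul_sum, mul_ite, mul_zero,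
          mul_comm]
    _ = n * f (-x) := by rw [sum_range_ite_dvd_sub hn hf]

/-- As `cot = cos / sin` is `0` at multiples of `π`, this also holds for `n ∣ j`, where both sides
vanish. -/
theorem cot_pi_mul_div_eq_two_I_mul_dft_sawtooth {n : ℕ} (hn : n ≠ 0) (j : ℤ) :
    Complex.cot (π * (j / n)) = 2 * I * dft n (fun m ↦ (sawtooth (m / n) : ℂ)) j := by
  set q := cexp (2 * π * I * j / n) with hq
  have hdft : dft n (fun m ↦ (sawtooth (m / n) : ℂ)) j =
      ∑ i ∈ range n, (sawtooth (i / n) : ℂ) * q ^ i := by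
    simp only [dft, exp_two_pi_I_mul_natCast_div_eq_pow, Int.cast_natCast, q]
  rw [Complex.cot_pi_eq_exp_ratio, hdft,
    show cexp (2 * π * I * (j / n)) = q by rw [hq, mul_div_assoc]]
  have hqn : q ^ n = 1 := exp_two_pi_I_intCast_div_pow_self hn j
  clear_value q
  by_cases hq1 : q = 1
  · simp [hq1, sum_range_sawtooth hn]
  · rw [sum_range_sawtooth_mul_pow_of_ne_one hn hqn hq1]
    have hne₁ : 1 - q ≠ 0 := sub_ne_zero.mpr (Ne.symm hq1)
    have hne₂ : q - 1 ≠ 0 := sub_ne_zero.mpr hq1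
    field_simp
    linear_combination (q ^ 2 - 1) * Complex.I_sq

theorem sum_range_cot_mul_cot_eq_sum_sawtooth {n : ℕ} (hn : n ≠ 0) (b : ℤ) :
    ∑ k ∈ range n, Complex.cot (π * (k / n)) * Complex.cot (π * (k * b / n)) =
      4 * n * ∑ l ∈ range n, ((sawtooth (l / n) * sawtooth (l * b / n) : ℚ) : ℂ) := by
  set s : ℤ → ℂ := fun m ↦ (sawtooth (m / n) : ℂ)
  have hs : Function.Periodic s n := (periodic_sawtooth_intCast_div n hn).comp _
  have hcot (k : ℕ) : Complex.cot (π * (k / n)) = 2 * I * dft n s k := by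
    simpa using cot_pi_mul_div_eq_two_I_mul_dft_sawtooth hn k
  have hcot_mul (k : ℕ) : Complex.cot (π * (k * b / n)) =
      2 * I * ∑ l ∈ range n, s l * cexp (2 * π * I * (l * b : ℤ) * k / n) := by
    rw [show (k : ℂ) * b = ((k * b : ℤ) : ℂ) by push_cast; ring,
      cot_pi_mul_div_eq_two_I_mul_dft_sawtooth hn, dft]
    refine congrArg _ (sum_congr rfl fun l _ ↦ ?_)
    congr 2
    push_cast
    ring
  calc ∑ k ∈ range n, Complex.cot (π * (k / n)) * Complex.cot (π * (k * b / n))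
      = -4 * ∑ l ∈ range n, s l *
          ∑ k ∈ range n, dft n s k * cexp (2 * π * I * (l * b : ℤ) * k / n) := by
        simp_rw [hcot, hcot_mul, mul_sum]
        rw [sum_comm]
        refine sum_congr rfl fun l _ ↦ sum_congr rfl fun k _ ↦ ?_
        ring_nf
        rw [Complex.I_sq]
        ring
    _ = -4 * ∑ l ∈ range n, s l * (n * s (-(l * b))) := by
        simp_rw [sum_range_dft_mul_exp hn hs]
    _ = 4 * n * ∑ l ∈ range n, ((sawtooth (l / n) * sawtooth (l * b / n) : ℚ) : ℂ) := by
        simp only [s, mul_sum]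
        refine sum_congr rfl fun l _ ↦ ?_
        push_cast [neg_div, sawtooth_neg]
        ring

theorem sum_Icc_one_natCast_eq_sum_range_add_one {M : Type*} [AddCommMonoid M] (n : ℕ)
    (f : ℤ → M) : ∑ m ∈ Icc (1 : ℤ) n, f m = ∑ i ∈ range n, f (i + 1) := by
  rw [Int.Icc_eq_finset_map, sum_map]
  simp [add_comm]

theorem sum_Icc_one_natCast_eq_sum_range {M : Type*} [AddCommMonoid M] (n : ℕ) {f : ℤ → M}
    (hf : f n = f 0) : ∑ m ∈ Icc (1 : ℤ) n, f m = ∑ i ∈ range n, f i := by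
  rw [sum_Icc_one_natCast_eq_sum_range_add_one]
  cases n with
  | zero => simp
  | succ n =>
    rw [sum_range_succ, sum_range_succ' (fun i : ℕ ↦ f i)]
    push_cast at hf ⊢
    rw [hf]

theorem sum_Icc_one_natCast_sub_one_eq_sum_range {M : Type*} [AddCommMonoid M] (n : ℕ)
    {f : ℤ → M} (hf : f 0 = 0) : ∑ m ∈ Icc (1 : ℤ) (n - 1), f m = ∑ i ∈ range n, f i := by
  cases n with
  | zero => simp
  | succ n =>
    rw [Nat.cast_succ, add_sub_cancel_right, sum_Icc_one_natCast_eq_sum_range_add_one,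
      sum_range_succ' (fun i : ℕ ↦ f i)]
    push_cast
    rw [hf, add_zero]

theorem dedekindSum_eq_cot_sum_general (a b : ℤ) (ha : 1 ≤ a) :
    (dedekindSum b a : ℝ)
      = 1 / (4 * (a : ℝ)) * ∑ k ∈ Finset.Icc (1 : ℤ) (a - 1),
          (Real.cos ((k : ℝ) * Real.pi / a) / Real.sin ((k : ℝ) * Real.pi / a)) *
          (Real.cos ((k : ℝ) * (b : ℝ) * Real.pi / a) / Real.sin ((k : ℝ) * (b : ℝ) * Real.pi / a)) := by
  lift a to ℕ using (by omega) with n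
  have hn : n ≠ 0 := by omega
  calc (dedekindSum b n : ℝ)
      = ((∑ l ∈ range n, sawtooth (l / n) * sawtooth (l * b / n) : ℚ) : ℝ) := by
        rw [dedekindSum, sum_Icc_one_natCast_eq_sum_range n (by simp [sawtooth, hn])]
        push_cast
        rfl
    _ = 1 / (4 * n) * ∑ k ∈ range n, Real.cot (π * (k / n)) * Real.cot (π * (k * b / n)) := by
        apply Complex.ofReal_injective
        push_cast
        rw [sum_range_cot_mul_cot_eq_sum_sawtooth hn, ← mul_assoc,
          one_div_mul_cancel (by simp [hn]), one_mul]
        push_cast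
        rfl
    _ = _ := by
        rw [sum_Icc_one_natCast_sub_one_eq_sum_range n (by simp)]
        simp only [Real.cot_eq_cos_div_sin, Int.cast_natCast, mul_div_assoc]
        congr 1
        refine sum_congr rfl fun k _ ↦ ?_
        ring_nf

theorem dedekindSum_eq_cot_sum (a b : ℤ) (ha : 1 ≤ a) (hab : Int.gcd a b = 1) :
    (dedekindSum b a : ℝ)
      = 1 / (4 * (a : ℝ)) * ∑ k ∈ Finset.Icc (1 : ℤ) (a - 1),
          (Real.cos ((k : ℝ) * Real.pi / a) / Real.sin ((k : ℝ) * Real.pi / a)) *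
          (Real.cos ((k : ℝ) * (b : ℝ) * Real.pi / a) / Real.sin ((k : ℝ) * (b : ℝ) * Real.pi / a)) :=
  dedekindSum_eq_cot_sum_general a b ha
end

section
/- Let p₁,...,p₄ be pairwise coprime integers ≥ 2, P = ∏pⱼ, and χ the periodic function of period 2P associated to a quadruple ℓ (equal to -∏εⱼ at n ≡ P(1+∑εⱼℓⱼ/pⱼ) mod 2P and 0 otherwise). Then χ(n + P) = -χ'(n) for all n, where χ' is the periodic function associated to the quadruple σᵢ(ℓ) obtained by replacing ℓᵢ with pᵢ - ℓᵢ. -/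
open Finset

/-- The sign ±1 attached to a boolean. -/
def sgn (b : Bool) : ℤ := if b then 1 else -1

/-- The periodic function `χ_{2P}^{ℓ}` of period `2P`: it takes the value `-∏ⱼ εⱼ`
at `n ≡ P(1 + ∑ⱼ εⱼ ℓⱼ/pⱼ) = P + ∑ⱼ εⱼ (P/pⱼ) ℓⱼ (mod 2P)` and `0` otherwise. -/
def chi (p ℓ : Fin 4 → ℕ) (n : ℤ) : ℤ :=
  -∑ ε : Fin 4 → Bool, (∏ j, sgn (ε j)) *
    (if (n : ZMod (2 * ∏ j, p j)) =
        (((∏ j, p j : ℕ) : ℤ) + ∑ j, sgn (ε j) * ((∏ i, p i) / p j : ℕ) * (ℓ j : ℤ) : ℤ)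
      then 1 else 0)

lemma sgn_not (b : Bool) : sgn (!b) = -sgn b := by cases b <;> simp [sgn]

theorem chi_shift_by_P (p ℓ : Fin 4 → ℕ)
    (hp : ∀ j, 2 ≤ p j) (hcop : ∀ i j, i ≠ j → Nat.Coprime (p i) (p j))
    (hℓ : ∀ j, 0 < ℓ j ∧ ℓ j < p j) (i : Fin 4) (n : ℤ) :
    chi p ℓ (n + (∏ j, p j : ℕ)) = -chi p (Function.update ℓ i (p i - ℓ i)) n := by
  have hflip : Function.Involutive (fun ε : Fin 4 → Bool => Function.update ε i (!ε i)) := by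
    intro ε
    funext j
    by_cases h : j = i
    · subst h; simp
    · simp [Function.update_of_ne h]
  unfold chi
  rw [neg_neg, ← Finset.sum_neg_distrib]
  refine Fintype.sum_bijective _ hflip.bijective _ _ ?_
  intro ε
  have hdvd : p i ∣ ∏ j, p j := Finset.dvd_prod_of_mem p (Finset.mem_univ i)
  -- product of signs
  have hprod : ∏ j, sgn (Function.update ε i (!ε i) j) = -∏ j, sgn (ε j) := by
    rw [← Finset.prod_erase_mul _ _ (Finset.mem_univ i),
        ← Finset.prod_erase_mul _ (fun j => sgn (ε j)) (Finset.mem_univ i)]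
    have h1 : ∏ j ∈ univ.erase i, sgn (Function.update ε i (!ε i) j)
        = ∏ j ∈ univ.erase i, sgn (ε j) :=
      Finset.prod_congr rfl fun j hj => by
        rw [Function.update_of_ne (Finset.mem_erase.mp hj).1]
    rw [h1, Function.update_self, sgn_not]; ring
  -- sum identity
  have hsum : ∑ j, sgn (Function.update ε i (!ε i) j) * (((∏ k, p k) / p j : ℕ) : ℤ) *
        ((Function.update ℓ i (p i - ℓ i) j : ℕ) : ℤ)
      = (∑ j, sgn (ε j) * (((∏ k, p k) / p j : ℕ) : ℤ) * (ℓ j : ℤ))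
          - sgn (ε i) * ((∏ k, p k : ℕ) : ℤ) := by
    rw [← Finset.sum_erase_add _ _ (Finset.mem_univ i),
        ← Finset.sum_erase_add _ (fun j => sgn (ε j) * (((∏ k, p k) / p j : ℕ) : ℤ) * (ℓ j : ℤ))
          (Finset.mem_univ i)]
    have h1 : ∑ j ∈ univ.erase i, sgn (Function.update ε i (!ε i) j) *
          (((∏ k, p k) / p j : ℕ) : ℤ) * ((Function.update ℓ i (p i - ℓ i) j : ℕ) : ℤ)
        = ∑ j ∈ univ.erase i, sgn (ε j) * (((∏ k, p k) / p j : ℕ) : ℤ) * (ℓ j : ℤ) :=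
      Finset.sum_congr rfl fun j hj => by
        rw [Function.update_of_ne (Finset.mem_erase.mp hj).1,
            Function.update_of_ne (Finset.mem_erase.mp hj).1]
    rw [h1, Function.update_self, Function.update_self, sgn_not]
    have h2 : ((p i - ℓ i : ℕ) : ℤ) = (p i : ℤ) - (ℓ i : ℤ) :=
      Nat.cast_sub (le_of_lt (hℓ i).2)
    have h3 : (((∏ k, p k) / p i : ℕ) : ℤ) * (p i : ℤ) = ((∏ k, p k : ℕ) : ℤ) := by
      rw [← Nat.cast_mul, Nat.div_mul_cancel hdvd]
    rw [h2, ← h3]; ring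
  -- the condition equivalence
  set Q := 2 * ∏ j, p j with hQ
  set A : ℤ := ((∏ j, p j : ℕ) : ℤ) with hA
  have hPP : ((A : ZMod Q)) + (A : ZMod Q) = 0 := by
    rw [hA, Int.cast_natCast, ← Nat.cast_add, ← two_mul, ← hQ, ZMod.natCast_self]
  have hsgnP : ((sgn (ε i) : ℤ) : ZMod Q) * (A : ZMod Q) = (A : ZMod Q) := by
    cases h : ε i
    · simp only [sgn, if_neg Bool.false_ne_true]
      push_cast
      linear_combination -hPP
    · simp [sgn]
  have key2 : ((A + ((∑ j, sgn (ε j) * (((∏ k, p k) / p j : ℕ) : ℤ) * (ℓ j : ℤ))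
        - sgn (ε i) * A) : ℤ) : ZMod Q)
      = ((A + ∑ j, sgn (ε j) * (((∏ k, p k) / p j : ℕ) : ℤ) * (ℓ j : ℤ) : ℤ) : ZMod Q)
        - (A : ZMod Q) := by
    simp only [Int.cast_add, Int.cast_sub, Int.cast_mul, hsgnP]
    ring
  have hcond : ((n : ZMod Q) =
        ((A + ((∑ j, sgn (ε j) * (((∏ k, p k) / p j : ℕ) : ℤ) * (ℓ j : ℤ))
          - sgn (ε i) * A) : ℤ) : ZMod Q))
      ↔ (((n + A : ℤ) : ZMod Q) =
        ((A + ∑ j, sgn (ε j) * (((∏ k, p k) / p j : ℕ) : ℤ) * (ℓ j : ℤ) : ℤ) : ZMod Q)) := by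
    rw [key2, eq_sub_iff_add_eq]; simp only [Int.cast_add]
  rw [hprod, hsum]
  rw [show sgn (ε i) * ((∏ k, p k : ℕ) : ℤ) = sgn (ε i) * A from rfl]
  rw [if_congr hcond rfl rfl]
  ring
end

section
/- Let p₁,...,p₄ be pairwise coprime integers ≥ 2 with ∑ⱼ 1/pⱼ < 1, P = ∏ⱼ pⱼ, and χ the period-2P function of the quadruple (1,1,1,1) (equal to -∏εⱼ at n ≡ P(1 + ∑εⱼ/pⱼ) mod 2P, else 0). Then -z^P ∏_{j=1}^{4}(z^{P/pⱼ} - z^{-P/pⱼ}) = ∑_{n=0}^{2P-1} χ(n)·z^n as Laurent polynomials in z. -/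
open Finset

/-!
Expanding the product over the sign vectors `ε ∈ {±1}⁴` gives
`-∑_ε (∏ⱼ εⱼ) z^(P + ∑ⱼ εⱼ P/pⱼ)`. Since `∑ⱼ 1/pⱼ < 1`, every exponent lies in `(0, 2P)`, so
each monomial sits at the unique representative in `[0, 2P)` of its residue class mod `2P`,
which is where `χ` records the coefficient `-∏ⱼ εⱼ`.
-/

lemma abs_sgn (b : Bool) : |sgn b| = 1 := by
  cases b <;> simp [sgn]

lemma abs_sum_sgn_mul_le {ι : Type*} [Fintype ι] (ε : ι → Bool) (a : ι → ℤ) :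
    |∑ j, sgn (ε j) * a j| ≤ ∑ j, |a j| :=
  (abs_sum_le_sum_abs _ _).trans_eq <| sum_congr rfl fun j _ => by rw [abs_mul, abs_sgn, one_mul]

lemma zpow_sum₀ {G ι : Type*} [CommGroupWithZero G] {z : G} (hz : z ≠ 0) (s : Finset ι)
    (f : ι → ℤ) : z ^ (∑ i ∈ s, f i) = ∏ i ∈ s, z ^ f i := by
  classical
  induction s using Finset.induction_on with
  | empty => simp
  | insert a s ha ih => rw [sum_insert ha, prod_insert ha, zpow_add₀ hz, ih]

lemma prod_zpow_sub_zpow_neg {K ι : Type*} [Field K] [Fintype ι] [DecidableEq ι] {z : K}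
    (hz : z ≠ 0) (a : ι → ℤ) :
    ∏ j, (z ^ a j - z ^ (-a j)) =
      ∑ ε : ι → Bool, ((∏ j, sgn (ε j) : ℤ) : K) * z ^ (∑ j, sgn (ε j) * a j) := by
  have hfactor : ∀ j, z ^ a j - z ^ (-a j) = ∑ b : Bool, (sgn b : K) * z ^ (sgn b * a j) := by
    intro j
    simp [sgn, sub_eq_add_neg]
  rw [prod_congr rfl fun j _ => hfactor j, Fintype.prod_sum]
  refine sum_congr rfl fun ε _ => ?_
  rw [prod_mul_distrib, zpow_sum₀ hz, Int.cast_prod]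

lemma sum_mul_zpow_eq_sum_range {K α : Type*} [DivisionRing K] [Fintype α] (c e : α → ℤ)
    {M : ℕ} (he : ∀ a, 0 ≤ e a ∧ e a < M) (z : K) :
    ∑ a, (c a : K) * z ^ e a =
      ∑ n ∈ range M,
        ((∑ a, c a * if ((n : ℤ) : ZMod M) = (e a : ZMod M) then 1 else 0 : ℤ) : K) * z ^ n := by
  have hcoeff : ∀ n ∈ range M, ∀ a, ((n : ℤ) : ZMod M) = (e a : ZMod M) ↔ n = (e a).toNat := by
    intro n hn a
    obtain ⟨he0, heM⟩ := he a
    rw [mem_range] at hn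
    rw [ZMod.intCast_eq_intCast_iff', Int.emod_eq_of_lt (by positivity) (by omega),
      Int.emod_eq_of_lt he0 heM]
    omega
  calc ∑ a, (c a : K) * z ^ e a
      = ∑ a, ∑ n ∈ range M, if n = (e a).toNat then (c a : K) * z ^ n else 0 := by
        refine sum_congr rfl fun a _ => ?_
        obtain ⟨he0, heM⟩ := he a
        rw [sum_ite_eq', if_pos (mem_range.mpr (by omega)), ← zpow_natCast,
          Int.toNat_of_nonneg he0]
    _ = _ := by
        rw [sum_comm]
        refine sum_congr rfl fun n hn => ?_
        simp only [hcoeff n hn]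
        push_cast
        rw [sum_mul]
        refine sum_congr rfl fun a _ => ?_
        split_ifs <;> simp

lemma sum_prod_div_lt_prod {ι : Type*} [Fintype ι] (p : ι → ℕ) (hp : ∀ j, 0 < p j)
    (hsum : ∑ j, (1 : ℚ) / p j < 1) : ∑ j, (∏ i, p i) / p j < ∏ j, p j := by
  have hP : (0 : ℚ) < ((∏ i, p i : ℕ) : ℚ) := by exact_mod_cast prod_pos fun j _ => hp j
  have hcast : ∀ j, (((∏ i, p i) / p j : ℕ) : ℚ) = ((∏ i, p i : ℕ) : ℚ) * (1 / p j) := fun j => by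
    rw [Nat.cast_div (dvd_prod_of_mem p (mem_univ j)) (by exact_mod_cast (hp j).ne'),
      mul_one_div]
  suffices (∑ j, (((∏ i, p i) / p j : ℕ) : ℚ)) < ((∏ i, p i : ℕ) : ℚ) by exact_mod_cast this
  calc ∑ j, (((∏ i, p i) / p j : ℕ) : ℚ)
      = ((∏ i, p i : ℕ) : ℚ) * ∑ j, (1 : ℚ) / p j := by
        rw [mul_sum]
        exact sum_congr rfl fun j _ => hcast j
    _ < ((∏ i, p i : ℕ) : ℚ) * 1 := mul_lt_mul_of_pos_left hsum hP
    _ = _ := mul_one _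

theorem chi_generating_function_of_sum_lt (p ℓ : Fin 4 → ℕ)
    (h : ∑ j, (∏ i, p i) / p j * ℓ j < ∏ j, p j) {z : ℂ} (hz : z ≠ 0) :
    -z ^ ((∏ j, p j : ℕ) : ℤ) *
        ∏ j, (z ^ ((((∏ i, p i) / p j : ℕ) : ℤ) * ℓ j) -
          z ^ (-((((∏ i, p i) / p j : ℕ) : ℤ) * ℓ j)))
      = ∑ n ∈ range (2 * ∏ j, p j), (chi p ℓ n : ℂ) * z ^ n := by
  set P := ∏ j, p j
  set a : Fin 4 → ℤ := fun j => ((P / p j : ℕ) : ℤ) * ℓ j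
  set e : (Fin 4 → Bool) → ℤ := fun ε => (P : ℤ) + ∑ j, sgn (ε j) * a j
  have he : ∀ ε, 0 ≤ e ε ∧ e ε < ((2 * P : ℕ) : ℤ) := by
    have hsum : ∑ j, |a j| < P := by
      simp only [a, abs_of_nonneg (by positivity : ∀ j, (0 : ℤ) ≤ _)]
      exact_mod_cast h
    intro ε
    have := abs_lt.mp ((abs_sum_sgn_mul_le ε a).trans_lt hsum)
    simp only [e]
    push_cast
    constructor <;> linarith
  calc _ = ∑ ε : Fin 4 → Bool, ((-∏ j, sgn (ε j) : ℤ) : ℂ) * z ^ e ε := by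
        rw [prod_zpow_sub_zpow_neg hz, mul_sum]
        refine sum_congr rfl fun ε _ => ?_
        rw [zpow_add₀ hz, Int.cast_neg, zpow_natCast]
        ring
    _ = _ := by
        rw [sum_mul_zpow_eq_sum_range _ _ he]
        refine sum_congr rfl fun n _ => ?_
        simp only [chi, e, a, neg_mul, sum_neg_distrib, mul_assoc]
        rfl

theorem chi_generating_function_general (p : Fin 4 → ℕ)
    (hp : ∀ j, 2 ≤ p j)
    (hsum : (∑ j, (1 : ℚ) / p j) < 1) (z : ℂ) (hz : z ≠ 0) :
    -z ^ ((∏ j, p j : ℕ) : ℤ) *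
        ∏ j, (z ^ (((∏ i, p i) / p j : ℕ) : ℤ) - z ^ (-(((∏ i, p i) / p j : ℕ) : ℤ)))
      = ∑ n ∈ Finset.range (2 * ∏ j, p j), (chi p (fun _ => 1) (n : ℤ) : ℂ) * z ^ (n : ℕ) := by
  have h := sum_prod_div_lt_prod p (fun j => zero_lt_two.trans_le (hp j)) hsum
  simpa using chi_generating_function_of_sum_lt p (fun _ => 1) (by simpa using h) hz

theorem chi_generating_function (p : Fin 4 → ℕ)
    (hp : ∀ j, 2 ≤ p j) (hcop : ∀ i j, i ≠ j → Nat.Coprime (p i) (p j))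
    (hsum : (∑ j, (1 : ℚ) / p j) < 1) (z : ℂ) (hz : z ≠ 0) :
    -z ^ ((∏ j, p j : ℕ) : ℤ) *
        ∏ j, (z ^ (((∏ i, p i) / p j : ℕ) : ℤ) - z ^ (-(((∏ i, p i) / p j : ℕ) : ℤ)))
      = ∑ n ∈ Finset.range (2 * ∏ j, p j), (chi p (fun _ => 1) (n : ℤ) : ℂ) * z ^ (n : ℕ) :=
  chi_generating_function_general p hp hsum z hz
end

section
/- Let P ≥ 2 be an integer and a an integer with 0 < a < P. Define the odd periodic function ψ(n) of period 2P by ψ(n) = ±1 if n ≡ ±a mod 2P and 0 otherwise. Then for every integer N ≥ 1, the limit as t → 0⁺ of ∑_{n=0}^{∞} ψ(n)·e^{πi n²N/(2P) - nt} equals -∑_{k=0}^{2P} ψ(k)·e^{πi N k²/(2P)}·B₁(k/(2P)) = (1 - a/P)·e^{πi a² N/(2P)}, where B₁(x) = x - 1/2. -/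
open Complex Finset Filter Topology

/-- The odd periodic function `ψ_{2P}^{(a)}` of period `2P`: `ψ(n) = ±1` for
`n ≡ ±a (mod 2P)` and `0` otherwise. -/
def psi (P a : ℕ) (n : ℤ) : ℤ :=
  (if (n : ZMod (2 * P)) = ((a : ℤ) : ZMod (2 * P)) then 1 else 0) -
    (if (n : ZMod (2 * P)) = ((-(a : ℤ) : ℤ) : ZMod (2 * P)) then 1 else 0)

open scoped Real

/-! Abel summation with `z = e^{-t}`. The quadratic phase `e^{π i n² N / (2P)}` depends only on
`±n mod 2P`, so it is constant on the support `n ≡ ±a` of `ψ`, and for `t > 0` the series equals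
`e^{π i a² N / (2P)} (z^a - z^(2P-a)) / (1 - z^(2P))`. Numerator and denominator vanish at `z = 1`,
so the limit `t → 0⁺` is the ratio of their derivatives there, `(2P - 2a) / (2P) = 1 - a/P`.
In the finite sum only `k = a` and `k = 2P - a` contribute. -/

lemma tendsto_div_nhdsNE_of_hasDerivAt {𝕜 : Type*} [NontriviallyNormedField 𝕜] {f g : 𝕜 → 𝕜}
    {x f' g' : 𝕜} (hf : HasDerivAt f f' x) (hg : HasDerivAt g g' x) (hfx : f x = 0)
    (hgx : g x = 0) (hg' : g' ≠ 0) :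
    Tendsto (fun z => f z / g z) (𝓝[≠] x) (𝓝 (f' / g')) := by
  refine ((hasDerivAt_iff_tendsto_slope.mp hf).div
    (hasDerivAt_iff_tendsto_slope.mp hg) hg').congr' ?_
  filter_upwards [self_mem_nhdsWithin] with z hz
  have hz : z - x ≠ 0 := sub_ne_zero.mpr hz
  simp only [Pi.div_apply, slope_def_field, hfx, hgx, sub_zero]
  field_simp

lemma tendsto_pow_sub_pow_div_one_sub_pow {𝕜 : Type*} [NontriviallyNormedField 𝕜] [CharZero 𝕜]
    (a b : ℕ) {c : ℕ} (hc : c ≠ 0) :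
    Tendsto (fun z : 𝕜 => (z ^ a - z ^ b) / (1 - z ^ c)) (𝓝[≠] 1) (𝓝 (((b : 𝕜) - a) / c)) := by
  have hf : HasDerivAt (fun z : 𝕜 => z ^ a - z ^ b) (a - b) 1 := by
    simpa using (hasDerivAt_pow a (1 : 𝕜)).fun_sub (hasDerivAt_pow b 1)
  have hg : HasDerivAt (fun z : 𝕜 => 1 - z ^ c) (-c) 1 := by
    simpa using (hasDerivAt_pow c (1 : 𝕜)).const_sub 1
  convert tendsto_div_nhdsNE_of_hasDerivAt hf hg (by simp) (by simp) (by simpa using hc) using 2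
  rw [div_neg, ← neg_div, neg_sub]

lemma tendsto_cexp_neg_nhdsGT_zero_nhdsNE_one :
    Tendsto (fun t : ℝ => cexp (-t)) (𝓝[>] 0) (𝓝[≠] 1) := by
  refine tendsto_nhdsWithin_iff.mpr ⟨?_, ?_⟩
  · have h : ContinuousAt (fun t : ℝ => cexp (-t)) 0 := by fun_prop
    simpa using h.tendsto.mono_left nhdsWithin_le_nhds
  · filter_upwards [self_mem_nhdsWithin] with t ht h1
    have hnorm := congrArg norm h1
    rw [← ofReal_neg, norm_exp_ofReal, norm_one, Real.exp_eq_one_iff] at hnorm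
    exact neg_ne_zero.mpr ht.ne' hnorm

lemma hasSum_ite_mod_eq_pow {K : Type*} [NormedField K] {z : K} (hz : ‖z‖ < 1) {m r : ℕ}
    (hr : r < m) :
    HasSum (fun n : ℕ => if n % m = r then z ^ n else 0) (z ^ r / (1 - z ^ m)) := by
  have hinj : Function.Injective (fun q : ℕ => r + m * q) := fun q₁ q₂ h =>
    Nat.eq_of_mul_eq_mul_left (by omega) (Nat.add_left_cancel h)
  rw [← hinj.hasSum_iff]
  · have hzm : ‖z ^ m‖ < 1 := by rw [norm_pow]; exact pow_lt_one₀ (norm_nonneg z) hz (by omega)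
    rw [div_eq_mul_inv]
    refine ((hasSum_geometric_of_norm_lt_one hzm).mul_left (z ^ r)).congr_fun fun q => ?_
    simp [Nat.add_mul_mod_self_left, Nat.mod_eq_of_lt hr, pow_add, pow_mul]
  · intro n hn
    rw [if_neg]
    rintro rfl
    exact hn ⟨n / m, by simp [Nat.mod_add_div]⟩

lemma psi_natCast {P a : ℕ} (ha0 : 0 < a) (ha : a < 2 * P) (n : ℕ) :
    psi P a n =
      (if n % (2 * P) = a then 1 else 0) - (if n % (2 * P) = 2 * P - a then 1 else 0) := by
  have hneg : ((-(a : ℤ) : ℤ) : ZMod (2 * P)) = ((2 * P - a : ℕ) : ZMod (2 * P)) := by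
    rw [Nat.cast_sub ha.le, ZMod.natCast_self, zero_sub, Int.cast_neg, Int.cast_natCast]
  simp only [psi, Int.cast_natCast, hneg, ZMod.natCast_eq_natCast_iff', Nat.mod_eq_of_lt ha,
    Nat.mod_eq_of_lt (show 2 * P - a < 2 * P by omega)]

lemma cexp_phase_eq_of_intCast_eq (N : ℕ) {P : ℕ} (hP : P ≠ 0) {m n : ℤ}
    (h : (m : ZMod (2 * P)) = n) :
    cexp (π * I * m ^ 2 * N / (2 * P)) = cexp (π * I * n ^ 2 * N / (2 * P)) := by
  obtain ⟨q, hq⟩ := (ZMod.intCast_eq_intCast_iff_dvd_sub m n (2 * P)).mp h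
  have hn : (n : ℂ) = m + 2 * P * q := by
    rw [show n = m + 2 * P * q by push_cast at hq; linarith]
    push_cast; ring
  rw [exp_eq_exp_iff_exists_int, hn]
  refine ⟨-(N * (m * q + P * q ^ 2)), ?_⟩
  field_simp
  push_cast
  ring

lemma psi_mul_cexp_phase (N : ℕ) {P : ℕ} (hP : P ≠ 0) (a : ℕ) (n : ℤ) :
    (psi P a n : ℂ) * cexp (π * I * n ^ 2 * N / (2 * P)) =
      psi P a n * cexp (π * I * a ^ 2 * N / (2 * P)) := by
  by_cases hplus : (n : ZMod (2 * P)) = ((a : ℤ) : ZMod (2 * P))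
  · rw [cexp_phase_eq_of_intCast_eq N hP hplus, Int.cast_natCast]
  by_cases hminus : (n : ZMod (2 * P)) = ((-(a : ℤ) : ℤ) : ZMod (2 * P))
  · rw [cexp_phase_eq_of_intCast_eq N hP hminus, Int.cast_neg, neg_sq, Int.cast_natCast]
  · simp only [psi, if_neg hplus, if_neg hminus, sub_zero, Int.cast_zero, zero_mul]

lemma sum_range_psi_mul {P a : ℕ} (ha0 : 0 < a) (ha : a < 2 * P) (f : ℕ → ℂ) :
    ∑ k ∈ range (2 * P + 1), (psi P a k : ℂ) * f k = f a - f (2 * P - a) := by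
  have hmod : ∀ k ∈ range (2 * P + 1), ∀ r, 0 < r → r < 2 * P → (k % (2 * P) = r ↔ k = r) := by
    intro k hk r hr0 hr
    rcases (Nat.lt_succ_iff.mp (mem_range.mp hk)).lt_or_eq with hk | rfl
    · rw [Nat.mod_eq_of_lt hk]
    · simp only [Nat.mod_self]; omega
  calc ∑ k ∈ range (2 * P + 1), (psi P a k : ℂ) * f k
      = ∑ k ∈ range (2 * P + 1),
          ((if k = a then f k else 0) - if k = 2 * P - a then f k else 0) := by
        refine sum_congr rfl fun k hk => ?_
        simp only [psi_natCast ha0 ha, hmod k hk a ha0 ha,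
          hmod k hk (2 * P - a) (by omega) (by omega)]
        push_cast
        split_ifs <;> ring
    _ = f a - f (2 * P - a) := by
        rw [sum_sub_distrib, sum_ite_eq', sum_ite_eq', if_pos (by simp; omega), if_pos (by simp)]

lemma hasSum_psi_mul_pow {P a : ℕ} (ha0 : 0 < a) (ha : a < 2 * P) {z : ℂ} (hz : ‖z‖ < 1) :
    HasSum (fun n : ℕ => (psi P a n : ℂ) * z ^ n)
      ((z ^ a - z ^ (2 * P - a)) / (1 - z ^ (2 * P))) := by
  rw [sub_div]
  refine ((hasSum_ite_mod_eq_pow hz ha).sub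
    (hasSum_ite_mod_eq_pow hz (by omega : 2 * P - a < 2 * P))).congr_fun fun n => ?_
  rw [psi_natCast ha0 ha]
  push_cast
  split_ifs <;> ring

lemma hasSum_psi_mul_cexp_phase_sub (N : ℕ) {P a : ℕ} (ha0 : 0 < a) (ha : a < P) {t : ℝ}
    (ht : 0 < t) :
    HasSum (fun n : ℕ => (psi P a n : ℂ) * cexp (π * I * (n : ℂ) ^ 2 * N / (2 * P) - n * t))
      (cexp (π * I * a ^ 2 * N / (2 * P)) *
        ((cexp (-t) ^ a - cexp (-t) ^ (2 * P - a)) / (1 - cexp (-t) ^ (2 * P)))) := by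
  have hz : ‖cexp (-t)‖ < 1 := by
    rw [← ofReal_neg, norm_exp_ofReal, Real.exp_lt_one_iff]
    exact neg_neg_of_pos ht
  refine ((hasSum_psi_mul_pow ha0 (by omega) hz).mul_left _).congr_fun fun n => ?_
  have hphase := psi_mul_cexp_phase N (by omega : P ≠ 0) a n
  rw [Int.cast_natCast] at hphase
  rw [sub_eq_add_neg, exp_add, ← mul_assoc, hphase, show -(n * (t : ℂ)) = n * -t by ring,
    exp_nat_mul]
  ring

theorem eichler_psi_limit_general (P a N : ℕ) (ha0 : 0 < a) (ha : a < P) :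
    Filter.Tendsto
      (fun t : ℝ => ∑' n : ℕ, (psi P a (n : ℤ) : ℂ) *
        Complex.exp (Real.pi * Complex.I * (n : ℂ) ^ 2 * N / (2 * P) - (n : ℂ) * (t : ℂ)))
      (𝓝[>] (0 : ℝ))
      (𝓝 (-∑ k ∈ Finset.range (2 * P + 1), (psi P a (k : ℤ) : ℂ) *
        Complex.exp (Real.pi * Complex.I * N * (k : ℂ) ^ 2 / (2 * P)) * ((k : ℂ) / (2 * P) - 1/2)))
    ∧
    -∑ k ∈ Finset.range (2 * P + 1), (psi P a (k : ℤ) : ℂ) *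
        Complex.exp (Real.pi * Complex.I * N * (k : ℂ) ^ 2 / (2 * P)) * ((k : ℂ) / (2 * P) - 1/2)
      = (1 - (a : ℂ) / P) * Complex.exp (Real.pi * Complex.I * (a : ℂ) ^ 2 * N / (2 * P)) := by
  have hP : P ≠ 0 := by omega
  set E := cexp (π * I * a ^ 2 * N / (2 * P))
  have hterm (k : ℕ) : (psi P a k : ℂ) * cexp (π * I * N * k ^ 2 / (2 * P)) * (k / (2 * P) - 1 / 2)
      = psi P a k * (E * (k / (2 * P) - 1 / 2)) := by
    have hphase := psi_mul_cexp_phase N hP a k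
    rw [Int.cast_natCast] at hphase
    rw [mul_right_comm _ (N : ℂ), hphase, mul_assoc]
  have hsum : -∑ k ∈ range (2 * P + 1), (psi P a k : ℂ) *
      cexp (π * I * N * (k : ℂ) ^ 2 / (2 * P)) * ((k : ℂ) / (2 * P) - 1 / 2) = (1 - a / P) * E := by
    rw [sum_congr rfl fun k _ => hterm k, sum_range_psi_mul ha0 (by omega), Nat.cast_sub (by omega)]
    field_simp
    push_cast
    ring
  have hval : (1 - a / P) * E = E * ((((2 * P - a : ℕ) : ℂ) - a) / ((2 * P : ℕ) : ℂ)) := by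
    rw [Nat.cast_sub (by omega)]
    field_simp
    push_cast
    ring
  refine ⟨?_, hsum⟩
  rw [hsum, hval]
  have hlim := ((tendsto_pow_sub_pow_div_one_sub_pow a (2 * P - a) (by omega : 2 * P ≠ 0)).comp
    tendsto_cexp_neg_nhdsGT_zero_nhdsNE_one).const_mul E
  exact hlim.congr' (eventually_nhdsWithin_of_forall fun t ht =>
    (hasSum_psi_mul_cexp_phase_sub N ha0 ha ht).tsum_eq.symm)

theorem eichler_psi_limit (P a N : ℕ) (hP : 2 ≤ P) (ha0 : 0 < a) (ha : a < P) (hN : 1 ≤ N) :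
    Filter.Tendsto
      (fun t : ℝ => ∑' n : ℕ, (psi P a (n : ℤ) : ℂ) *
        Complex.exp (Real.pi * Complex.I * (n : ℂ) ^ 2 * N / (2 * P) - (n : ℂ) * (t : ℂ)))
      (𝓝[>] (0 : ℝ))
      (𝓝 (-∑ k ∈ Finset.range (2 * P + 1), (psi P a (k : ℤ) : ℂ) *
        Complex.exp (Real.pi * Complex.I * N * (k : ℂ) ^ 2 / (2 * P)) * ((k : ℂ) / (2 * P) - 1/2)))
    ∧
    -∑ k ∈ Finset.range (2 * P + 1), (psi P a (k : ℤ) : ℂ) *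
        Complex.exp (Real.pi * Complex.I * N * (k : ℂ) ^ 2 / (2 * P)) * ((k : ℂ) / (2 * P) - 1/2)
      = (1 - (a : ℂ) / P) * Complex.exp (Real.pi * Complex.I * (a : ℂ) ^ 2 * N / (2 * P)) :=
  eichler_psi_limit_general P a N ha0 ha
end
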